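/- Every automorphism of G₆ maps the translation subgroup T onto itself (T is characteristic in G₆), and the induced homomorphism from Out(G₆) to Aut(G₆/T) is surjective, with kernel the subgroup of Out(G₆) generated by the images of the automorphisms a, b, c and e. (Here G₆/T ≅ (ℤ/2ℤ)², so Aut(G₆/T) ≅ GL(2,𝔽₂).) -/

import Mathlib

/-! `Aff(3) = ℝ³ ⋊ GL(3,ℝ)`, realized as the group of affine self-equivalences of `ℝ³`
(with multiplication given by composition, so that `(v,A)(w,B) = (v + Aw, AB)`). -/

abbrev V3 : Type := Fin 3 → ℝ
abbrev Aff3 : Type := V3 ≃ᵃ[ℝ] V3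

/-- The linear self-equivalence of `ℝ³` given by a diagonal matrix with entries `±1`. -/
noncomputable def diagLin (d : Fin 3 → ℝ) (hd : ∀ i, d i * d i = 1) : V3 ≃ₗ[ℝ] V3 where
  toFun v := fun i => d i * v i
  invFun v := fun i => d i * v i
  map_add' u v := by funext i; simp [mul_add]
  map_smul' c v := by funext i; simp [smul_eq_mul]; ring
  left_inv v := by funext i; simp [← mul_assoc, hd i]
  right_inv v := by funext i; simp [← mul_assoc, hd i]

lemma sq_one_X : ∀ i, (![(1:ℝ),-1,-1]) i * (![(1:ℝ),-1,-1]) i = 1 := by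
  intro i; fin_cases i <;> norm_num

lemma sq_one_Y : ∀ i, (![(-1:ℝ),1,-1]) i * (![(-1:ℝ),1,-1]) i = 1 := by
  intro i; fin_cases i <;> norm_num

/-- The affine transformation `x = (½e₁, X)`, acting by `w ↦ Xw + ½e₁`,
where `X = diag[1,−1,−1]`. -/
noncomputable def affx : Aff3 :=
  ((diagLin ![1,-1,-1] sq_one_X).toAffineEquiv).trans
    (AffineEquiv.constVAdd ℝ V3 ![1/2, 0, 0])

/-- The affine transformation `y = (½(e₂−e₃), Y)`, acting by `w ↦ Yw + ½(e₂−e₃)`,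
where `Y = diag[−1,1,−1]`. -/
noncomputable def affy : Aff3 :=
  ((diagLin ![-1,1,-1] sq_one_Y).toAffineEquiv).trans
    (AffineEquiv.constVAdd ℝ V3 ![0, 1/2, -1/2])

/-- `z = xy = (½(e₁−e₂+e₃), Z)`. -/
noncomputable def affz : Aff3 := affx * affy

/-- The Hantzsche–Wendt group `G₆`, the subgroup of `Aff(3)` generated by `x` and `y`. -/
noncomputable def G6 : Subgroup Aff3 := Subgroup.closure {affx, affy}

/-- The translation subgroup `T = G₆ ∩ (ℝ³ × {I})`: the elements of `G₆`
whose linear part is the identity. -/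
noncomputable def TT : Subgroup Aff3 :=
  G6 ⊓ (AffineEquiv.linearHom : Aff3 →* (V3 ≃ₗ[ℝ] V3)).ker

lemma affx_mem : affx ∈ G6 := Subgroup.subset_closure (by simp)
lemma affy_mem : affy ∈ G6 := Subgroup.subset_closure (by simp)

/-- `x` as an element of `G₆`. -/
noncomputable def xg : G6 := ⟨affx, affx_mem⟩
/-- `y` as an element of `G₆`. -/
noncomputable def yg : G6 := ⟨affy, affy_mem⟩
/-- `z = xy` as an element of `G₆`. -/
noncomputable def zg : G6 := xg * yg


/-! Every element of `G₆` is `t · r` with `t` an integer translation and `r` one of the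
coset representatives `1, x, y, z`, whose linear parts form the Klein four-group. Squares are
translations and `x², y², z²` are the unit translations, so `T` is the subgroup generated by
squares and hence characteristic, with `G₆/T ≅ (ℤ/2)²`. Its automorphism group `S₃` is reached by
conjugating with two affine maps normalising `G₆`. An automorphism acting trivially on `G₆/T`
sends `x ↦ τx`, `y ↦ σy` with `τ, σ ∈ ℤ³`, and then acts on `T ≅ ℤ³` by a diagonal matrix of
signs; composing with `a`, `b`, `c` makes these signs `+1`, and the remaining automorphisms form
a copy of `ℤ³` generated by `e`, `a · conj y · c` and `b · conj x · c`. -/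

open Function

lemma Subgroup.closure_range_mul_self_characteristic (G : Type*) [Group G] :
    (Subgroup.closure (Set.range fun g : G => g * g)).Characteristic := by
  refine Subgroup.characteristic_iff_map_le.mpr fun φ => ?_
  rw [MonoidHom.map_closure, Subgroup.closure_le]
  rintro _ ⟨_, ⟨g, rfl⟩, rfl⟩
  exact Subgroup.subset_closure ⟨φ g, (map_mul φ g g).symm⟩

lemma Subgroup.mem_normalizer_closure {G : Type*} [Group G] {s : Set G} {n : G}
    (h : ∀ g ∈ s, n * g * n⁻¹ ∈ Subgroup.closure s)
    (h' : ∀ g ∈ s, n⁻¹ * g * n ∈ Subgroup.closure s) :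
    n ∈ Subgroup.normalizer (Subgroup.closure s : Set G) := by
  have map_le : ∀ m : G, (∀ g ∈ s, m * g * m⁻¹ ∈ Subgroup.closure s) →
      (Subgroup.closure s).map (MulAut.conj m).toMonoidHom ≤ Subgroup.closure s := by
    intro m hm
    rw [MonoidHom.map_closure, Subgroup.closure_le]
    rintro _ ⟨g, hg, rfl⟩
    exact hm g hg
  rw [Subgroup.mem_normalizer_iff_map_conj_eq]
  refine le_antisymm (map_le n h) ?_
  rw [Subgroup.map_equiv_eq_comap_symm, ← Subgroup.map_le_iff_le_comap, ← MulAut.inv_def,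
    ← map_inv]
  exact map_le n⁻¹ (by simpa using h')

section InducedAut

variable {G Q : Type*} [Group G] [Group Q] {q : G →* Q} (hq : Surjective q) [q.ker.Characteristic]

noncomputable def inducedMulEquiv (α : MulAut G) : Q ≃* Q :=
  let e := QuotientGroup.quotientKerEquivOfSurjective q hq
  (e.symm.trans (QuotientGroup.congr q.ker q.ker α
    (Subgroup.characteristic_iff_map_eq.mp ‹_› α))).trans e

lemma inducedMulEquiv_apply (α : MulAut G) (g : G) : inducedMulEquiv hq α (q g) = q (α g) := by
  have h : (QuotientGroup.quotientKerEquivOfSurjective q hq).symm (q g) = g :=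
    (MulEquiv.symm_apply_eq _).mpr rfl
  simp only [inducedMulEquiv, MulEquiv.trans_apply, h]
  rfl

noncomputable def inducedAut : MulAut G →* MulAut Q :=
  MonoidHom.mk' (inducedMulEquiv hq) fun α β => MulEquiv.ext fun u => by
    obtain ⟨g, rfl⟩ := hq u
    simp only [MulAut.mul_apply, inducedMulEquiv_apply]

lemma inducedAut_apply (α : MulAut G) (g : G) : inducedAut hq α (q g) = q (α g) :=
  inducedMulEquiv_apply hq α g

lemma inducedAut_conj (g : G) : inducedAut hq (MulAut.conj g) = MulAut.conj (q g) :=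
  MulEquiv.ext fun u => by
    obtain ⟨h, rfl⟩ := hq u
    simp [inducedAut_apply]

lemma mem_ker_inducedAut_iff (α : MulAut G) :
    α ∈ (inducedAut hq).ker ↔ q.comp α.toMonoidHom = q := by
  rw [MonoidHom.mem_ker, MulEquiv.ext_iff, (hq.forall), MonoidHom.ext_iff]
  simp [inducedAut_apply]

end InducedAut

noncomputable def transl (t : Fin 3 → ℤ) : Aff3 := AffineEquiv.constVAdd ℝ V3 (fun i => (t i : ℝ))

lemma transl_apply (t : Fin 3 → ℤ) (p : V3) (i : Fin 3) : transl t p i = t i + p i := rfl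

lemma transl_add (t s : Fin 3 → ℤ) : transl (t + s) = transl t * transl s := by
  ext p i
  simp only [transl_apply, AffineEquiv.coe_mul, comp_apply, Pi.add_apply, Int.cast_add]
  ring

lemma transl_zero : transl 0 = 1 := by
  ext p i
  simp [transl_apply]

lemma transl_zsmul (n : ℤ) (t : Fin 3 → ℤ) : transl (n • t) = transl t ^ n := by
  rw [transl, transl, ← AffineEquiv.constVAdd_zsmul]
  congr 1
  funext i
  simp

lemma transl_injective : Injective transl := by
  intro t s h
  funext i
  exact_mod_cast by simpa [transl_apply] using congrFun (congrArg (fun g : Aff3 => g 0) h) i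

lemma affx_apply (p : V3) (i : Fin 3) :
    affx p i = ![(1:ℝ), -1, -1] i * p i + ![(1:ℝ)/2, 0, 0] i := by
  simp [affx, diagLin]
  ring

lemma affy_apply (p : V3) (i : Fin 3) :
    affy p i = ![(-1:ℝ), 1, -1] i * p i + ![(0:ℝ), 1/2, -1/2] i := by
  simp [affy, diagLin]
  ring

noncomputable def cosetRep : Fin 4 → Aff3 := ![1, affx, affy, affz]

-- Multiplication tables for the normal form `transl t * cosetRep k`: `signs k` is the diagonal of
-- the linear part of `cosetRep k`, `kleinMul` the group law of `G₆/T ≅ (ℤ/2)²`, and `cocycle k k'`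
-- the translation part of `cosetRep k * cosetRep k'`.

def signs : Fin 4 → Fin 3 → ℤ := ![![1, 1, 1], ![1, -1, -1], ![-1, 1, -1], ![-1, -1, 1]]

def kleinMul : Fin 4 → Fin 4 → Fin 4 :=
  ![![0, 1, 2, 3], ![1, 0, 3, 2], ![2, 3, 0, 1], ![3, 2, 1, 0]]

def cocycle : Fin 4 → Fin 4 → Fin 3 → ℤ :=
  ![![![0, 0, 0], ![0, 0, 0], ![0, 0, 0], ![0, 0, 0]],
    ![![0, 0, 0], ![1, 0, 0], ![0, 0, 0], ![1, 0, 0]],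
    ![![0, 0, 0], ![-1, 1, -1], ![0, 1, 0], ![-1, 0, -1]],
    ![![0, 0, 0], ![0, -1, 1], ![0, -1, 0], ![0, 0, 1]]]

lemma cosetRep_mul_transl (k : Fin 4) (s : Fin 3 → ℤ) :
    cosetRep k * transl s = transl (signs k * s) * cosetRep k := by
  fin_cases k <;> ext p i <;> fin_cases i <;>
    simp [cosetRep, signs, affz, transl_apply, affx_apply, affy_apply] <;> ring

lemma cosetRep_mul_cosetRep (k k' : Fin 4) :
    cosetRep k * cosetRep k' = transl (cocycle k k') * cosetRep (kleinMul k k') := by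
  fin_cases k <;> fin_cases k' <;> ext p i <;> fin_cases i <;>
    simp [cosetRep, kleinMul, cocycle, affz, transl_apply, affx_apply, affy_apply] <;> ring

lemma cosetRep_zero : cosetRep 0 = 1 := rfl

lemma kleinMul_self (k : Fin 4) : kleinMul k k = 0 := by
  fin_cases k <;> rfl

lemma normalForm_mul (t s : Fin 3 → ℤ) (k k' : Fin 4) :
    transl t * cosetRep k * (transl s * cosetRep k') =
      transl (t + signs k * s + cocycle k k') * cosetRep (kleinMul k k') := by
  rw [transl_add, transl_add, mul_assoc (transl t), ← mul_assoc (cosetRep k),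
    cosetRep_mul_transl, mul_assoc _ (cosetRep k), cosetRep_mul_cosetRep]
  group

lemma normalForm_inv (t : Fin 3 → ℤ) (k : Fin 4) :
    (transl t * cosetRep k)⁻¹ = transl (-(signs k * t) - cocycle k k) * cosetRep k := by
  refine inv_eq_of_mul_eq_one_left ?_
  rw [normalForm_mul, kleinMul_self, cosetRep_zero, mul_one, ← transl_zero]
  congr 1
  abel

lemma exists_normalForm {g : Aff3} (hg : g ∈ G6) : ∃ t k, g = transl t * cosetRep k := by
  induction hg using Subgroup.closure_induction with
  | mem g hg =>
    rcases hg with rfl | rfl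
    exacts [⟨0, 1, by rw [transl_zero, one_mul]; rfl⟩, ⟨0, 2, by rw [transl_zero, one_mul]; rfl⟩]
  | one => exact ⟨0, 0, by rw [transl_zero, cosetRep_zero, one_mul]⟩
  | mul g h _ _ ihg ihh =>
    obtain ⟨t, k, rfl⟩ := ihg
    obtain ⟨s, k', rfl⟩ := ihh
    exact ⟨_, _, normalForm_mul t s k k'⟩
  | inv g _ ih =>
    obtain ⟨t, k, rfl⟩ := ih
    exact ⟨_, _, normalForm_inv t k⟩

lemma linearHom_transl (t : Fin 3 → ℤ) : AffineEquiv.linearHom (transl t) = 1 := rfl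

lemma linearHom_cosetRep_apply (k : Fin 4) (v : V3) (i : Fin 3) :
    AffineEquiv.linearHom (cosetRep k) v i = signs k i * v i := by
  have h := (cosetRep k : V3 →ᵃ[ℝ] V3).linearMap_vsub v 0
  rw [vsub_eq_sub, sub_zero] at h
  change (cosetRep k : V3 →ᵃ[ℝ] V3).linear v i = _
  rw [h]
  fin_cases k <;> fin_cases i <;>
    simp [cosetRep, signs, affz, affx_apply, affy_apply]

lemma signs_injective : Injective signs := by decide

lemma linearHom_cosetRep_injective : Injective fun k => AffineEquiv.linearHom (cosetRep k) := by
  intro k k' h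
  refine signs_injective (funext fun i => ?_)
  have := congrArg (fun L : V3 ≃ₗ[ℝ] V3 => L 1 i) h
  beta_reduce at this
  rw [linearHom_cosetRep_apply, linearHom_cosetRep_apply] at this
  simpa using this

lemma cosetRep_mul_self (k : Fin 4) : cosetRep k * cosetRep k = transl (cocycle k k) := by
  rw [cosetRep_mul_cosetRep, kleinMul_self, cosetRep_zero, mul_one]

lemma transl_eq_zpow_mul_self (t : Fin 3 → ℤ) :
    transl t = (affx * affx) ^ t 0 * (affy * affy) ^ t 1 * (affz * affz) ^ t 2 := by
  have ht : t = t 0 • cocycle 1 1 + t 1 • cocycle 2 2 + t 2 • cocycle 3 3 := by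
    funext i
    fin_cases i <;> simp [cocycle]
  conv_lhs => rw [ht]
  rw [transl_add, transl_add, transl_zsmul, transl_zsmul, transl_zsmul, ← cosetRep_mul_self,
    ← cosetRep_mul_self, ← cosetRep_mul_self]
  rfl

lemma affz_mem : affz ∈ G6 := mul_mem affx_mem affy_mem

lemma transl_mem (t : Fin 3 → ℤ) : transl t ∈ G6 := by
  rw [transl_eq_zpow_mul_self]
  have hx := mul_mem affx_mem affx_mem
  have hy := mul_mem affy_mem affy_mem
  have hz := mul_mem affz_mem affz_mem
  exact mul_mem (mul_mem (zpow_mem hx _) (zpow_mem hy _)) (zpow_mem hz _)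

lemma cosetRep_mem (k : Fin 4) : cosetRep k ∈ G6 := by
  fin_cases k
  exacts [one_mem _, affx_mem, affy_mem, affz_mem]

noncomputable def translG (t : Fin 3 → ℤ) : G6 := ⟨transl t, transl_mem t⟩

noncomputable def cosetRepG (k : Fin 4) : G6 := ⟨cosetRep k, cosetRep_mem k⟩

lemma translG_add (t s : Fin 3 → ℤ) : translG (t + s) = translG t * translG s :=
  Subtype.ext (transl_add t s)

lemma translG_zero : translG 0 = 1 := Subtype.ext transl_zero

lemma translG_zsmul (n : ℤ) (t : Fin 3 → ℤ) : translG (n • t) = translG t ^ n :=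
  Subtype.ext (by rw [Subgroup.coe_zpow]; exact transl_zsmul n t)

lemma translG_injective : Injective translG :=
  fun _ _ h => transl_injective (congrArg Subtype.val h)

lemma translG_eq_zpow_mul_self (t : Fin 3 → ℤ) :
    translG t = (xg * xg) ^ t 0 * (yg * yg) ^ t 1 * (zg * zg) ^ t 2 :=
  Subtype.ext (transl_eq_zpow_mul_self t)

lemma exists_normalForm_G6 (g : G6) : ∃ t k, g = translG t * cosetRepG k := by
  obtain ⟨t, k, h⟩ := exists_normalForm g.2
  exact ⟨t, k, Subtype.ext h⟩

lemma cosetRepG_zero : cosetRepG 0 = 1 := rfl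
lemma cosetRepG_one : cosetRepG 1 = xg := rfl
lemma cosetRepG_two : cosetRepG 2 = yg := rfl
lemma cosetRepG_three : cosetRepG 3 = zg := rfl

lemma normalFormG_mul (t s : Fin 3 → ℤ) (k k' : Fin 4) :
    translG t * cosetRepG k * (translG s * cosetRepG k') =
      translG (t + signs k * s + cocycle k k') * cosetRepG (kleinMul k k') :=
  Subtype.ext (normalForm_mul t s k k')

lemma normalFormG_mul_self (t : Fin 3 → ℤ) (k : Fin 4) :
    translG t * cosetRepG k * (translG t * cosetRepG k) =
      translG (t + signs k * t + cocycle k k) := by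
  rw [normalFormG_mul, kleinMul_self, cosetRepG_zero, mul_one]

lemma cosetRepG_mul_self (k : Fin 4) : cosetRepG k * cosetRepG k = translG (cocycle k k) := by
  simpa [translG_zero] using normalFormG_mul_self 0 k

lemma inv_xg : xg⁻¹ = translG ![-1, 0, 0] * xg := by
  refine inv_eq_of_mul_eq_one_left ?_
  rw [mul_assoc, ← cosetRepG_one, cosetRepG_mul_self, ← translG_add, ← translG_zero]
  congr 1
  decide

lemma inv_yg : yg⁻¹ = translG ![0, -1, 0] * yg := by
  refine inv_eq_of_mul_eq_one_left ?_
  rw [mul_assoc, ← cosetRepG_two, cosetRepG_mul_self, ← translG_add, ← translG_zero]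
  congr 1
  decide

lemma yg_sq : yg ^ 2 = translG ![0, 1, 0] := by
  rw [sq, ← cosetRepG_two, cosetRepG_mul_self]
  rfl

lemma zg_sq : zg ^ 2 = translG ![0, 0, 1] := by
  rw [sq, ← cosetRepG_three, cosetRepG_mul_self]
  rfl

lemma closure_xg_yg : Subgroup.closure {xg, yg} = ⊤ := by
  have h : ((↑) : G6 → Aff3) ⁻¹' {affx, affy} = {xg, yg} := by
    ext g
    simp [xg, yg, Subtype.ext_iff]
  rw [← h]
  exact Subgroup.closure_closure_coe_preimage

lemma G6.hom_ext {M : Type*} [Monoid M] {f f' : G6 →* M} (hx : f xg = f' xg) (hy : f yg = f' yg) :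
    f = f' :=
  MonoidHom.eq_of_eqOn_dense closure_xg_yg (by rintro g (rfl | rfl) <;> assumption)

lemma G6.mulAut_ext {α β : MulAut G6} (hx : α xg = β xg) (hy : α yg = β yg) : α = β :=
  MulEquiv.toMonoidHom_injective (G6.hom_ext hx hy)

lemma mem_T_iff (γ : G6) : γ ∈ TT.subgroupOf G6 ↔ AffineEquiv.linearHom (γ : Aff3) = 1 :=
  Subgroup.mem_subgroupOf.trans (and_iff_right γ.2)

lemma T_eq_closure_range_mul_self :
    TT.subgroupOf G6 = Subgroup.closure (Set.range fun g : G6 => g * g) := by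
  apply le_antisymm
  · intro γ hγ
    obtain ⟨t, k, rfl⟩ := exists_normalForm_G6 γ
    rw [mem_T_iff] at hγ
    change AffineEquiv.linearHom (transl t * cosetRep k) = 1 at hγ
    rw [map_mul, linearHom_transl, one_mul] at hγ
    have hk : k = 0 := linearHom_cosetRep_injective (hγ.trans (map_one _).symm)
    have hsq : ∀ g : G6, g * g ∈ Subgroup.closure (Set.range fun g : G6 => g * g) :=
      fun g => Subgroup.subset_closure ⟨g, rfl⟩
    rw [hk, cosetRepG_zero, mul_one, translG_eq_zpow_mul_self]
    exact mul_mem (mul_mem (zpow_mem (hsq _) _) (zpow_mem (hsq _) _)) (zpow_mem (hsq _) _)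
  · rw [Subgroup.closure_le]
    rintro _ ⟨γ, rfl⟩
    obtain ⟨t, k, rfl⟩ := exists_normalForm_G6 γ
    beta_reduce
    rw [SetLike.mem_coe, normalFormG_mul_self, mem_T_iff]
    exact linearHom_transl _

instance T_characteristic : (TT.subgroupOf G6).Characteristic := by
  rw [T_eq_closure_range_mul_self]
  exact Subgroup.closure_range_mul_self_characteristic G6

section Quotient

variable {Q : Type*} [Group Q] {q : G6 →* Q} (hk : q.ker = TT.subgroupOf G6)
include hk

lemma map_eq_map_iff_linearHom_eq (γ γ' : G6) :
    q γ = q γ' ↔ AffineEquiv.linearHom (γ : Aff3) = AffineEquiv.linearHom (γ' : Aff3) := by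
  rw [q.eq_iff, hk, mem_T_iff, Subgroup.coe_mul, Subgroup.coe_inv, map_mul, map_inv,
    inv_mul_eq_one, eq_comm]

lemma map_translG (t : Fin 3 → ℤ) : q (translG t) = 1 := by
  rw [← MonoidHom.mem_ker, hk, mem_T_iff]
  rfl

lemma map_translG_mul (t : Fin 3 → ℤ) (γ : G6) : q (translG t * γ) = q γ := by
  rw [map_mul, map_translG hk, one_mul]

lemma map_eq_map_cosetRepG_iff (γ : G6) (k : Fin 4) :
    q γ = q (cosetRepG k) ↔ ∃ t, γ = translG t * cosetRepG k := by
  refine ⟨fun h => ?_, fun ⟨t, ht⟩ => ht ▸ map_translG_mul hk t _⟩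
  obtain ⟨t, k', rfl⟩ := exists_normalForm_G6 γ
  rw [map_translG_mul hk] at h
  exact ⟨t, by rw [linearHom_cosetRep_injective ((map_eq_map_iff_linearHom_eq hk _ _).mp h)]⟩

lemma map_cosetRepG_injective : Injective fun k => q (cosetRepG k) := fun _ _ h =>
  linearHom_cosetRep_injective ((map_eq_map_iff_linearHom_eq hk _ _).mp h)

lemma exists_map_eq_map_cosetRepG (γ : G6) : ∃ k, q γ = q (cosetRepG k) := by
  obtain ⟨t, k, rfl⟩ := exists_normalForm_G6 γ
  exact ⟨k, map_translG_mul hk t _⟩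

lemma eq_one_or_map_xg_or_map_yg_or_mul (hs : Surjective q) (u : Q) :
    u = 1 ∨ u = q xg ∨ u = q yg ∨ u = q xg * q yg := by
  obtain ⟨γ, rfl⟩ := hs u
  obtain ⟨k, hγ⟩ := exists_map_eq_map_cosetRepG hk γ
  rw [hγ]
  fin_cases k
  exacts [Or.inl (map_one q), Or.inr (Or.inl rfl), Or.inr (Or.inr (Or.inl rfl)),
    Or.inr (Or.inr (Or.inr (map_mul q xg yg)))]

lemma map_xg_ne_one : q xg ≠ 1 := by
  simpa [cosetRepG_zero, cosetRepG_one] using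
    (map_cosetRepG_injective hk).ne (by decide : (1 : Fin 4) ≠ 0)

lemma map_yg_ne_one : q yg ≠ 1 := by
  simpa [cosetRepG_zero, cosetRepG_two] using
    (map_cosetRepG_injective hk).ne (by decide : (2 : Fin 4) ≠ 0)

lemma map_xg_ne_map_yg : q xg ≠ q yg :=
  (map_cosetRepG_injective hk).ne (by decide : (1 : Fin 4) ≠ 2)

lemma map_mul_self (γ : G6) : q γ * q γ = 1 := by
  obtain ⟨t, k, rfl⟩ := exists_normalForm_G6 γ
  rw [← map_mul, normalFormG_mul_self, map_translG hk]

lemma commute_of_surjective (hs : Surjective q) (u v : Q) : Commute u v := by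
  refine Commute.of_orderOf_dvd_two (fun w => orderOf_dvd_of_pow_eq_one ?_) u v
  obtain ⟨γ, rfl⟩ := hs w
  rw [pow_two, map_mul_self hk]

end Quotient

-- Two affine maps normalising `G₆`. On `G₆/T` they induce the transposition of `x` and `y` and the
-- 3-cycle `x ↦ y ↦ xy ↦ x`, which generate `Aut(G₆/T) ≅ S₃`.
noncomputable def swapNormalizer : Aff3 :=
  (LinearEquiv.funCongrLeft ℝ ℝ (Equiv.swap (0 : Fin 3) 1)).toAffineEquiv.trans
    (AffineEquiv.constVAdd ℝ V3 ![0, 0, -1/4])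

noncomputable def cycleNormalizer : Aff3 :=
  (LinearEquiv.funCongrLeft ℝ ℝ (finRotate 3).symm).toAffineEquiv.trans
    (AffineEquiv.constVAdd ℝ V3 ![0, 1/4, -1/4])

lemma swapNormalizer_apply (p : V3) : swapNormalizer p = ![p 1, p 0, p 2 - 1/4] := by
  ext i
  fin_cases i <;> simp [swapNormalizer, Equiv.swap_apply_of_ne_of_ne]
  ring

lemma cycleNormalizer_apply (p : V3) : cycleNormalizer p = ![p 2, p 0 + 1/4, p 1 - 1/4] := by
  ext i
  fin_cases i <;> simp [cycleNormalizer] <;> first | rfl | ring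

lemma mem_normalizer_G6 {n u w : Aff3} (hx : n * affx = affy * n) (hy : n * affy = u * n)
    (hx' : affx * n = n * w) (hu : u ∈ G6) (hw : w ∈ G6) :
    n ∈ Subgroup.normalizer (G6 : Set Aff3) := by
  refine Subgroup.mem_normalizer_closure ?_ ?_ <;> rintro g (rfl | rfl)
  · rw [mul_inv_eq_of_eq_mul hx]; exact affy_mem
  · rw [mul_inv_eq_of_eq_mul hy]; exact hu
  · rw [mul_assoc, hx', inv_mul_cancel_left]; exact hw
  · rw [mul_assoc, ← hx, inv_mul_cancel_left]; exact affx_mem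

lemma swapNormalizer_mul_affx : swapNormalizer * affx = affy * swapNormalizer := by
  ext p i
  fin_cases i <;> simp [swapNormalizer_apply, affx_apply, affy_apply]
  ring

lemma swapNormalizer_mul_affy :
    swapNormalizer * affy = transl ![0, 0, -1] * affx * swapNormalizer := by
  ext p i
  fin_cases i <;> simp [swapNormalizer_apply, affx_apply, affy_apply, transl_apply]
  ring

lemma affx_mul_swapNormalizer :
    affx * swapNormalizer = swapNormalizer * (transl ![0, 0, 1] * affy) := by
  ext p i
  fin_cases i <;> simp [swapNormalizer_apply, affx_apply, affy_apply, transl_apply]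
  ring

lemma cycleNormalizer_mul_affx : cycleNormalizer * affx = affy * cycleNormalizer := by
  ext p i
  fin_cases i <;> simp [cycleNormalizer_apply, affx_apply, affy_apply] <;> ring

lemma cycleNormalizer_mul_affy :
    cycleNormalizer * affy = transl ![-1, 1, 0] * affz * cycleNormalizer := by
  ext p i
  fin_cases i <;> simp [cycleNormalizer_apply, affz, affx_apply, affy_apply, transl_apply] <;> ring

lemma affx_mul_cycleNormalizer :
    affx * cycleNormalizer = cycleNormalizer * (transl ![-1, 1, 0] * affz) := by
  ext p i
  fin_cases i <;> simp [cycleNormalizer_apply, affz, affx_apply, affy_apply, transl_apply] <;> ring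

noncomputable def swapAut : MulAut G6 :=
  Subgroup.normalizerMonoidHom G6 ⟨swapNormalizer, mem_normalizer_G6 swapNormalizer_mul_affx
    swapNormalizer_mul_affy affx_mul_swapNormalizer (mul_mem (transl_mem _) affx_mem)
    (mul_mem (transl_mem _) affy_mem)⟩

noncomputable def cycleAut : MulAut G6 :=
  Subgroup.normalizerMonoidHom G6 ⟨cycleNormalizer, mem_normalizer_G6 cycleNormalizer_mul_affx
    cycleNormalizer_mul_affy affx_mul_cycleNormalizer (mul_mem (transl_mem _) affz_mem)
    (mul_mem (transl_mem _) affz_mem)⟩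

lemma swapAut_xg : swapAut xg = yg :=
  Subtype.ext (mul_inv_eq_of_eq_mul swapNormalizer_mul_affx)

lemma swapAut_yg : swapAut yg = translG ![0, 0, -1] * xg :=
  Subtype.ext (mul_inv_eq_of_eq_mul swapNormalizer_mul_affy)

lemma cycleAut_xg : cycleAut xg = yg :=
  Subtype.ext (mul_inv_eq_of_eq_mul cycleNormalizer_mul_affx)

lemma cycleAut_yg : cycleAut yg = translG ![-1, 1, 0] * zg :=
  Subtype.ext (mul_inv_eq_of_eq_mul cycleNormalizer_mul_affy)

lemma MulAut.ext_of_map_xg_yg {Q : Type*} [Group Q] {q : G6 →* Q} (hs : Surjective q)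
    {φ ψ : MulAut Q} (hx : φ (q xg) = ψ (q xg)) (hy : φ (q yg) = ψ (q yg)) : φ = ψ :=
  MulEquiv.toMonoidHom_injective ((MonoidHom.cancel_right hs).mp (G6.hom_ext hx hy))

section Surjective

variable {Q : Type*} [Group Q] {q : G6 →* Q} (hs : Surjective q) [q.ker.Characteristic]

lemma inducedAut_swapAut_xg : inducedAut hs swapAut (q xg) = q yg := by
  rw [inducedAut_apply, swapAut_xg]

lemma inducedAut_swapAut_yg (hk : q.ker = TT.subgroupOf G6) :
    inducedAut hs swapAut (q yg) = q xg := by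
  rw [inducedAut_apply, swapAut_yg, map_translG_mul hk]

lemma inducedAut_cycleAut_xg : inducedAut hs cycleAut (q xg) = q yg := by
  rw [inducedAut_apply, cycleAut_xg]

lemma inducedAut_cycleAut_yg (hk : q.ker = TT.subgroupOf G6) :
    inducedAut hs cycleAut (q yg) = q xg * q yg := by
  rw [inducedAut_apply, cycleAut_yg, map_translG_mul hk, zg, map_mul]

lemma inducedAut_surjective (hk : q.ker = TT.subgroupOf G6) : Surjective (inducedAut hs) := by
  intro φ
  have hx₁ : φ (q xg) ≠ 1 := (map_ne_one_iff φ φ.injective).mpr (map_xg_ne_one hk)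
  have hy₁ : φ (q yg) ≠ 1 := (map_ne_one_iff φ φ.injective).mpr (map_yg_ne_one hk)
  have hxy : φ (q xg) ≠ φ (q yg) := φ.injective.ne (map_xg_ne_map_yg hk)
  have hcomm := commute_of_surjective hk hs (q xg) (q yg)
  have hsq : ∀ u, q yg * (q yg * u) = u := fun u => by rw [← mul_assoc, map_mul_self hk, one_mul]
  have hswap_y := inducedAut_swapAut_yg hs hk
  have hcycle_y := inducedAut_cycleAut_yg hs hk
  rcases eq_one_or_map_xg_or_map_yg_or_mul hk hs (φ (q xg)) with hx | hx | hx | hx <;>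
    rcases eq_one_or_map_xg_or_map_yg_or_mul hk hs (φ (q yg)) with hy | hy | hy | hy <;>
    first
    | exact absurd hx hx₁
    | exact absurd hy hy₁
    | exact absurd (hx.trans hy.symm) hxy
    | skip
  on_goal 1 => refine ⟨1, ?_⟩
  on_goal 2 => refine ⟨swapAut * cycleAut, ?_⟩
  on_goal 3 => refine ⟨swapAut, ?_⟩
  on_goal 4 => refine ⟨cycleAut, ?_⟩
  on_goal 5 => refine ⟨cycleAut * cycleAut, ?_⟩
  on_goal 6 => refine ⟨cycleAut * swapAut, ?_⟩
  all_goals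
    refine MulAut.ext_of_map_xg_yg hs ?_ ?_ <;>
      simp only [map_one, map_mul, MulAut.one_apply, MulAut.mul_apply, hx, hy,
        inducedAut_swapAut_xg, hswap_y, inducedAut_cycleAut_xg, hcycle_y, hcomm.eq, mul_assoc,
        hsq]

end Surjective

def Shifts (α : MulAut G6) (τ σ : Fin 3 → ℤ) : Prop :=
  α xg = translG τ * xg ∧ α yg = translG σ * yg

-- `α` acts on `T ≅ ℤ³` by this diagonal matrix (`Shifts.apply_translG`): the entries are read off
-- from `α(x²) = (τx)²`, `α(y²) = (σy)²` and `α(z²) = ((τ + Xσ)z)²`.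
def diagFactor (τ σ : Fin 3 → ℤ) : Fin 3 → ℤ := ![2 * τ 0 + 1, 2 * σ 1 + 1, 2 * (τ 2 - σ 2) + 1]

namespace Shifts

variable {α β : MulAut G6} {τ σ τ' σ' : Fin 3 → ℤ}

lemma apply_zg (h : Shifts α τ σ) : α zg = translG (τ + signs 1 * σ) * zg := by
  have := normalFormG_mul τ σ 1 2
  rw [show cocycle 1 2 = 0 by decide, add_zero] at this
  rw [zg, map_mul, h.1, h.2, ← cosetRepG_one, ← cosetRepG_two, this]
  rfl

lemma apply_translG (h : Shifts α τ σ) (t : Fin 3 → ℤ) :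
    α (translG t) = translG (diagFactor τ σ * t) := by
  have hx := normalFormG_mul_self τ 1
  have hy := normalFormG_mul_self σ 2
  have hz := normalFormG_mul_self (τ + signs 1 * σ) 3
  rw [cosetRepG_one] at hx
  rw [cosetRepG_two] at hy
  rw [cosetRepG_three] at hz
  rw [translG_eq_zpow_mul_self, map_mul, map_mul, map_zpow, map_zpow, map_zpow, map_mul, map_mul,
    map_mul, h.1, h.2, h.apply_zg, hx, hy, hz, ← translG_zsmul, ← translG_zsmul, ← translG_zsmul,
    ← translG_add, ← translG_add]
  congr 1
  funext i
  simp only [Pi.add_apply, Pi.mul_apply, Pi.smul_apply, smul_eq_mul]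
  fin_cases i <;> simp [diagFactor, signs, cocycle] <;> ring

lemma mul (h : Shifts α τ σ) (h' : Shifts β τ' σ') :
    Shifts (α * β) (diagFactor τ σ * τ' + τ) (diagFactor τ σ * σ' + σ) := by
  constructor
  · rw [MulAut.mul_apply, h'.1, map_mul, h.apply_translG, h.1, ← mul_assoc, ← translG_add]
  · rw [MulAut.mul_apply, h'.2, map_mul, h.apply_translG, h.2, ← mul_assoc, ← translG_add]

lemma eq (h : Shifts α τ σ) (h' : Shifts β τ σ) : α = β :=
  G6.mulAut_ext (h.1.trans h'.1.symm) (h.2.trans h'.2.symm)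

lemma isUnit_diagFactor (h : Shifts α τ σ) (h' : Shifts α⁻¹ τ' σ') (i : Fin 3) :
    IsUnit (diagFactor τ σ i) := by
  have hinv : α⁻¹ (α (translG 1)) = translG 1 := by simp
  rw [h.apply_translG, h'.apply_translG, mul_one] at hinv
  exact IsUnit.of_mul_eq_one_right _ (congrFun (translG_injective hinv) i)

lemma one : Shifts 1 0 0 := by
  simp [Shifts, translG_zero]

lemma zpow (h : Shifts α τ σ) (hD : diagFactor τ σ = 1) (n : ℤ) :
    Shifts (α ^ n) (n • τ) (n • σ) := by
  have hinv : Shifts α⁻¹ (-τ) (-σ) := by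
    constructor <;> apply α.injective
    · rw [MulAut.apply_inv_self, map_mul, h.apply_translG, hD, one_mul, h.1, ← mul_assoc,
        ← translG_add, neg_add_cancel, translG_zero, one_mul]
    · rw [MulAut.apply_inv_self, map_mul, h.apply_translG, hD, one_mul, h.2, ← mul_assoc,
        ← translG_add, neg_add_cancel, translG_zero, one_mul]
  have hD' : diagFactor (-τ) (-σ) = 1 := by
    have h0 := congrFun hD 0
    have h1 := congrFun hD 1
    have h2 := congrFun hD 2
    simp only [diagFactor, Matrix.cons_val_zero, Matrix.cons_val_one, Matrix.cons_val,
      Pi.one_apply] at h0 h1 h2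
    funext i
    fin_cases i <;> simp [diagFactor] <;> omega
  induction n using Int.induction_on with
  | zero => simpa using Shifts.one
  | succ m ih =>
    rw [add_comm, zpow_one_add]
    convert h.mul ih using 1 <;> rw [hD, one_mul, add_smul, one_smul, add_comm]
  | pred m ih =>
    rw [sub_eq_neg_add, zpow_add, zpow_neg_one]
    convert hinv.mul ih using 1 <;> rw [hD', one_mul, add_smul, neg_one_smul, add_comm]

end Shifts

lemma affx_mul_affy : affx * affy = transl ![1, -1, 1] * affy * affx := by
  ext p i
  fin_cases i <;> simp [affx_apply, affy_apply, transl_apply] <;> ring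

lemma affy_mul_affx : affy * affx = transl ![-1, 1, -1] * affx * affy := by
  ext p i
  fin_cases i <;> simp [affx_apply, affy_apply, transl_apply] <;> ring

lemma shifts_conj_xg : Shifts (MulAut.conj xg) 0 ![1, -1, 1] := by
  constructor
  · rw [MulAut.conj_apply, mul_inv_cancel_right, translG_zero, one_mul]
  · exact Subtype.ext (mul_inv_eq_of_eq_mul affx_mul_affy)

lemma shifts_conj_yg : Shifts (MulAut.conj yg) ![-1, 1, -1] 0 := by
  constructor
  · exact Subtype.ext (mul_inv_eq_of_eq_mul affy_mul_affx)
  · rw [MulAut.conj_apply, mul_inv_cancel_right, translG_zero, one_mul]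

section Kernel

variable {H : Subgroup (MulAut G6)} (hconj : ∀ g, MulAut.conj g ∈ H) {a b c e : MulAut G6}
  (ha : Shifts a ![-1, 0, 0] 0) (hb : Shifts b 0 ![0, -1, 0]) (hc : Shifts c 0 ![0, 0, 1])
  (he : Shifts e ![0, 1, 0] 0) (haH : a ∈ H) (hbH : b ∈ H) (hcH : c ∈ H) (heH : e ∈ H)
include hconj ha hb hc he haH hbH hcH heH

-- These `β` form a copy of `ℤ³` with coordinates `(τ 1, τ 2, σ 0)`, in which `e`, `a · conj y · c`
-- and `b · conj x · c` are `(1, 0, 0)`, `(1, -1, 0)` and `(0, 0, 1)`.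
lemma mem_of_shifts_of_diagFactor_eq_one {β : MulAut G6} {τ σ : Fin 3 → ℤ} (hβ : Shifts β τ σ)
    (h0 : τ 0 = 0) (h1 : σ 1 = 0) (h2 : σ 2 = τ 2) : β ∈ H := by
  have hu : Shifts (a * MulAut.conj yg * c) ![0, 1, -1] ![0, 0, -1] := by
    convert (ha.mul shifts_conj_yg).mul hc using 1 <;> decide
  have hv : Shifts (b * MulAut.conj xg * c) 0 ![1, 0, 0] := by
    convert (hb.mul shifts_conj_xg).mul hc using 1 <;> decide
  have hγ := ((he.zpow (by decide) (τ 1 + τ 2)).mul (hu.zpow (by decide) (-τ 2))).mul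
    (hv.zpow (by decide) (σ 0))
  rw [hβ.eq (by
    convert hγ using 1 <;> funext i <;>
      simp only [Pi.add_apply, Pi.mul_apply, Pi.smul_apply, smul_eq_mul] <;>
      fin_cases i <;> simp [diagFactor, h0, h1, h2])]
  exact mul_mem (mul_mem (zpow_mem heH _) (zpow_mem (mul_mem (mul_mem haH (hconj _)) hcH) _))
    (zpow_mem (mul_mem (mul_mem hbH (hconj _)) hcH) _)

lemma mem_of_shifts {β : MulAut G6} {τ σ : Fin 3 → ℤ} (hβ : Shifts β τ σ)
    (h0 : τ 0 = 0 ∨ τ 0 = -1) (h1 : σ 1 = 0 ∨ σ 1 = -1) (h2 : σ 2 = τ 2 ∨ σ 2 = τ 2 + 1) :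
    β ∈ H := by
  -- Right multiplication by `c`, `b`, `a` changes only `σ 2`, `σ 1`, `τ 0` respectively.
  have step_c : ∀ {β τ σ}, Shifts β τ σ → τ 0 = 0 → σ 1 = 0 → (σ 2 = τ 2 ∨ σ 2 = τ 2 + 1) →
      β ∈ H := by
    rintro β τ σ hβ h0 h1 (h2 | h2)
    · exact mem_of_shifts_of_diagFactor_eq_one hconj ha hb hc he haH hbH hcH heH hβ h0 h1 h2
    · refine (H.mul_mem_cancel_right hcH).mp (mem_of_shifts_of_diagFactor_eq_one hconj ha hb hc he
        haH hbH hcH heH (hβ.mul hc) ?_ ?_ ?_) <;> simp [diagFactor] <;> omega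
  have step_b : ∀ {β τ σ}, Shifts β τ σ → τ 0 = 0 → (σ 1 = 0 ∨ σ 1 = -1) →
      (σ 2 = τ 2 ∨ σ 2 = τ 2 + 1) → β ∈ H := by
    rintro β τ σ hβ h0 (h1 | h1) h2
    · exact step_c hβ h0 h1 h2
    · refine (H.mul_mem_cancel_right hbH).mp (step_c (hβ.mul hb) ?_ ?_ ?_) <;>
        simp [diagFactor] <;> omega
  rcases h0 with h0 | h0
  · exact step_b hβ h0 h1 h2
  · refine (H.mul_mem_cancel_right haH).mp (step_b (hβ.mul ha) ?_ ?_ ?_) <;>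
      simp [diagFactor] <;> omega

end Kernel

section KernelOfInducedAut

variable {Q : Type*} [Group Q] {q : G6 →* Q} (hs : Surjective q) (hk : q.ker = TT.subgroupOf G6)
  [q.ker.Characteristic]
include hk

lemma mem_ker_inducedAut_iff_exists_shifts (α : MulAut G6) :
    α ∈ (inducedAut hs).ker ↔ ∃ τ σ, Shifts α τ σ := by
  rw [mem_ker_inducedAut_iff]
  constructor
  · intro h
    obtain ⟨τ, hτ⟩ := (map_eq_map_cosetRepG_iff hk (α xg) 1).mp (DFunLike.congr_fun h xg)
    obtain ⟨σ, hσ⟩ := (map_eq_map_cosetRepG_iff hk (α yg) 2).mp (DFunLike.congr_fun h yg)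
    exact ⟨τ, σ, hτ, hσ⟩
  · rintro ⟨τ, σ, hτ, hσ⟩
    exact G6.hom_ext ((map_eq_map_cosetRepG_iff hk (α xg) 1).mpr ⟨τ, hτ⟩)
      ((map_eq_map_cosetRepG_iff hk (α yg) 2).mpr ⟨σ, hσ⟩)

lemma conj_mem_ker_inducedAut (g : G6) : MulAut.conj g ∈ (inducedAut hs).ker := by
  rw [MonoidHom.mem_ker, inducedAut_conj]
  ext u
  exact (commute_of_surjective hk hs _ _).mul_inv_cancel

lemma ker_inducedAut_le {H : Subgroup (MulAut G6)} (hconj : ∀ g, MulAut.conj g ∈ H)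
    {a b c e : MulAut G6} (ha : Shifts a ![-1, 0, 0] 0) (hb : Shifts b 0 ![0, -1, 0])
    (hc : Shifts c 0 ![0, 0, 1]) (he : Shifts e ![0, 1, 0] 0)
    (haH : a ∈ H) (hbH : b ∈ H) (hcH : c ∈ H) (heH : e ∈ H) : (inducedAut hs).ker ≤ H := by
  intro α hα
  obtain ⟨τ, σ, h⟩ := (mem_ker_inducedAut_iff_exists_shifts hs hk α).mp hα
  obtain ⟨τ', σ', h'⟩ := (mem_ker_inducedAut_iff_exists_shifts hs hk α⁻¹).mp (inv_mem hα)
  have hD := fun i => Int.isUnit_iff.mp (h.isUnit_diagFactor h' i)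
  have h0 := hD 0
  have h1 := hD 1
  have h2 := hD 2
  simp only [diagFactor, Matrix.cons_val_zero, Matrix.cons_val_one, Matrix.cons_val] at h0 h1 h2
  exact mem_of_shifts hconj ha hb hc he haH hbH hcH heH h (by omega) (by omega) (by omega)

end KernelOfInducedAut

/-- Every automorphism of `G₆` maps the translation subgroup `T` onto
itself (`T` is characteristic in `G₆`); and for any realization `q : G₆ → Q` of the
quotient `G₆/T` (a surjective homomorphism with kernel `T`), the induced homomorphism
`Θ : Aut(G₆) → Aut(G₆/T)` is surjective, and the kernel of the induced map on
`Out(G₆)` is generated by the images of `a`, `b`, `c` and `e`; that is, the kernel of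
`Θ` is the subgroup of `Aut(G₆)` generated by `a`, `b`, `c`, `e` together with the
inner automorphisms. -/
theorem statement8 :
    (∀ α : MulAut G6, (TT.subgroupOf G6).map α.toMonoidHom = TT.subgroupOf G6) ∧
    (∀ a b c e : MulAut G6,
      a xg = xg⁻¹ → a yg = yg →
      b xg = xg → b yg = yg⁻¹ →
      c xg = xg → c yg = zg ^ 2 * yg →
      e xg = yg ^ 2 * xg → e yg = yg →
      ∀ (Q : Type) [Group Q] (q : G6 →* Q),
        Function.Surjective q → q.ker = TT.subgroupOf G6 →
        ∃ Θ : MulAut G6 →* MulAut Q,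
          (∀ (α : MulAut G6) (g : G6), Θ α (q g) = q (α g)) ∧
          Function.Surjective Θ ∧
          Θ.ker = Subgroup.closure
            ({a, b, c, e} ∪ Set.range (MulAut.conj : G6 →* MulAut G6))) := by
  refine ⟨Subgroup.characteristic_iff_map_eq.mp T_characteristic, ?_⟩
  intro a b c e hax hay hbx hby hcx hcy hex hey Q _ q hs hk
  have : q.ker.Characteristic := hk ▸ T_characteristic
  have ha : Shifts a ![-1, 0, 0] 0 := ⟨by rw [hax, inv_xg], by rw [hay, translG_zero, one_mul]⟩
  have hb : Shifts b 0 ![0, -1, 0] := ⟨by rw [hbx, translG_zero, one_mul], by rw [hby, inv_yg]⟩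
  have hc : Shifts c 0 ![0, 0, 1] := ⟨by rw [hcx, translG_zero, one_mul], by rw [hcy, zg_sq]⟩
  have he : Shifts e ![0, 1, 0] 0 := ⟨by rw [hex, yg_sq], by rw [hey, translG_zero, one_mul]⟩
  have mem_ker : ∀ {φ τ σ}, Shifts φ τ σ → φ ∈ (inducedAut hs).ker := fun h =>
    (mem_ker_inducedAut_iff_exists_shifts hs hk _).mpr ⟨_, _, h⟩
  refine ⟨inducedAut hs, inducedAut_apply hs, inducedAut_surjective hs hk, le_antisymm ?_ ?_⟩
  · have mem : ∀ φ ∈ ({a, b, c, e} ∪ Set.range (MulAut.conj : G6 →* MulAut G6)),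
        φ ∈ Subgroup.closure ({a, b, c, e} ∪ Set.range (MulAut.conj : G6 →* MulAut G6)) :=
      fun _ => (Subgroup.subset_closure ·)
    exact ker_inducedAut_le hs hk (fun g => mem _ (Or.inr ⟨g, rfl⟩)) ha hb hc he
      (mem _ (by simp)) (mem _ (by simp)) (mem _ (by simp)) (mem _ (by simp))
  · rw [Subgroup.closure_le]
    rintro φ ((rfl | rfl | rfl | rfl) | ⟨g, rfl⟩)
    exacts [mem_ker ha, mem_ker hb, mem_ker hc, mem_ker he, conj_mem_ker_inducedAut hs hk g]
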